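/- Let z be a fusible number that is a limit of smaller fusible numbers, and let m = e(z) be its exponent. Then z − 2^(−(m+n)) is fusible for every natural number n. -/
import Mathlib


/-- The set of fusible numbers. -/
inductive Fusible : ℝ → Prop
  | zero : Fusible 0
  | fuse (x y : ℝ) : Fusible x → Fusible y → |y - x| < 1 → Fusible ((x + y + 1) / 2)

/-- Full binary trees, used as representations of fusible numbers. -/
inductive RepTree where
  | leaf : RepTree
  | node (l r : RepTree) : RepTree

/-- The value of a representation: leaves are `0`, internal nodes fuse their children. -/
noncomputable def RepTree.val : RepTree → ℝ
  | .leaf => 0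
  | .node l r => (l.val + r.val + 1) / 2

/-- Validity of a representation: at every internal node, the children differ by less than 1. -/
def RepTree.Valid : RepTree → Prop
  | .leaf => True
  | .node l r => l.Valid ∧ r.Valid ∧ |r.val - l.val| < 1

/-- The height of a representation: length of the longest root-to-leaf path. -/
def RepTree.height : RepTree → ℕ
  | .leaf => 0
  | .node l r => max l.height r.height + 1

/-- `IsExp r n` means that the dyadic rational `r` has exponent `n`, i.e. `n` is the least
natural number such that `r = p / 2 ^ n` for an integer `p` (so that `p` is odd when `n ≥ 1`). -/
def IsExp (r : ℝ) (n : ℕ) : Prop :=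
  (∃ p : ℤ, r = (p : ℝ) / 2 ^ n) ∧ ∀ m : ℕ, m < n → ¬ ∃ p : ℤ, r = (p : ℝ) / 2 ^ m

/-- `HMaxIs z n` means that the maximum height over all representations of `z` is `n`. -/
def HMaxIs (z : ℝ) (n : ℕ) : Prop :=
  (∃ T : RepTree, T.Valid ∧ T.val = z ∧ T.height = n) ∧
  ∀ T : RepTree, T.Valid → T.val = z → T.height ≤ n

/-- `z` is a limit fusible number: it is the supremum of the smaller fusible numbers. -/
def IsLimitFusible (z : ℝ) : Prop :=
  IsLUB {w : ℝ | Fusible w ∧ w < z} z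

/- ### Auxiliary lemmas -/

lemma fusible_nonneg {x : ℝ} (h : Fusible x) : 0 ≤ x := by
  induction h with
  | zero => exact le_rfl
  | fuse a b ha hb hab iha ihb => linarith

lemma fusible_add_half {x : ℝ} (h : Fusible x) : Fusible (x + 1 / 2) := by
  have h2 := Fusible.fuse x x h h (by simp)
  have : (x + x + 1) / 2 = x + 1 / 2 := by ring
  rwa [this] at h2

lemma fusible_nat_half (k : ℕ) : Fusible ((k : ℝ) / 2) := by
  induction k with
  | zero => simpa using Fusible.zero
  | succ n ih =>
    have h2 := fusible_add_half ih
    have : ((n : ℝ)) / 2 + 1 / 2 = ((n + 1 : ℕ) : ℝ) / 2 := by push_cast; ring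
    rwa [this] at h2

lemma fusible_int {k : ℤ} (hk : 0 ≤ k) : Fusible (k : ℝ) := by
  have h2 := fusible_nat_half (2 * k.toNat)
  have h3 : ((k.toNat : ℕ) : ℝ) = (k : ℝ) := by exact_mod_cast Int.toNat_of_nonneg hk
  have : ((2 * k.toNat : ℕ) : ℝ) / 2 = (k : ℝ) := by push_cast; rw [h3]; ring
  rwa [this] at h2

lemma valid_fusible : ∀ T : RepTree, T.Valid → Fusible T.val := by
  intro T
  induction T with
  | leaf => intro _; exact Fusible.zero
  | node L R ihL ihR =>
    intro hT
    obtain ⟨h1, h2, h3⟩ := hT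
    exact Fusible.fuse _ _ (ihL h1) (ihR h2) h3

lemma fusible_tree {x : ℝ} (h : Fusible x) : ∃ T : RepTree, T.Valid ∧ T.val = x := by
  induction h with
  | zero => exact ⟨.leaf, trivial, rfl⟩
  | fuse a b ha hb hab iha ihb =>
    obtain ⟨Ta, hTa, va⟩ := iha
    obtain ⟨Tb, hTb, vb⟩ := ihb
    refine ⟨.node Ta Tb, ⟨hTa, hTb, ?_⟩, ?_⟩
    · rw [va, vb]; exact hab
    · show (Ta.val + Tb.val + 1) / 2 = (a + b + 1) / 2
      rw [va, vb]

/-- Grid fusion lemma: two fusibles on the grid `2^{-Mc}·ℤ` whose numerators differ by at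
most `2^Mc` can be "fused" (with the degenerate case giving one of the endpoints). -/
lemma grid_fuse (Mc : ℕ) (p q : ℤ) (hp : Fusible ((p : ℝ) / 2 ^ Mc))
    (hq : Fusible ((q : ℝ) / 2 ^ Mc)) (h : |q - p| ≤ 2 ^ Mc) :
    Fusible (((p : ℝ) / 2 ^ Mc + (q : ℝ) / 2 ^ Mc + 1) / 2) := by
  have hP : (0 : ℝ) < 2 ^ Mc := by positivity
  rcases lt_or_eq_of_le h with h' | h'
  · refine Fusible.fuse _ _ hp hq ?_
    rw [div_sub_div_same, abs_div, abs_of_pos hP, div_lt_one hP]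
    exact_mod_cast h'
  · rcases (abs_eq (le_of_lt (pow_pos (by norm_num : (0:ℤ) < 2) Mc))).mp h' with hqp | hqp
    · have hq' : (q : ℝ) = (p : ℝ) + 2 ^ Mc := by
        have h4 := congrArg (fun t : ℤ => (t : ℝ)) hqp
        push_cast at h4
        linarith
      have heq : ((p : ℝ) / 2 ^ Mc + (q : ℝ) / 2 ^ Mc + 1) / 2 = (q : ℝ) / 2 ^ Mc := by
        rw [hq']; field_simp; ring
      rwa [heq]
    · have hp' : (p : ℝ) = (q : ℝ) + 2 ^ Mc := by
        have h4 := congrArg (fun t : ℤ => (t : ℝ)) hqp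
        push_cast at h4
        linarith
      have heq : ((p : ℝ) / 2 ^ Mc + (q : ℝ) / 2 ^ Mc + 1) / 2 = (p : ℝ) / 2 ^ Mc := by
        rw [hp']; field_simp; ring
      rwa [heq]

/-- Main rounding lemma: the value of a valid representation rounded down to any dyadic grid
is fusible, and rounded up as well provided the value is off the grid. -/
lemma main_round : ∀ T : RepTree, T.Valid → ∀ M : ℕ,
    Fusible ((⌊(2:ℝ) ^ M * T.val⌋ : ℝ) / 2 ^ M) ∧
    (((⌊(2:ℝ) ^ M * T.val⌋ : ℝ) ≠ (2:ℝ) ^ M * T.val) →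
      Fusible (((⌊(2:ℝ) ^ M * T.val⌋ : ℝ) + 1) / 2 ^ M)) := by
  intro T
  induction T with
  | leaf =>
    intro _ M
    constructor
    · have h0 : (2:ℝ) ^ M * RepTree.leaf.val = 0 := by
        show (2:ℝ) ^ M * 0 = 0; ring
      rw [h0]
      simpa using Fusible.zero
    · intro h
      exfalso
      apply h
      have h0 : (2:ℝ) ^ M * RepTree.leaf.val = 0 := by
        show (2:ℝ) ^ M * 0 = 0; ring
      rw [h0]; simp
  | node L R ihL ihR =>
    intro hT M
    obtain ⟨hvL, hvR, hxy⟩ := hT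
    have hw : (RepTree.node L R).val = (L.val + R.val + 1) / 2 := rfl
    rw [hw] at *
    set x := L.val with hxdef
    set y := R.val with hydef
    have hyx1 : y - x < 1 := (abs_lt.mp hxy).2
    have hxy1 : x - y < 1 := by have := (abs_lt.mp hxy).1; linarith
    cases M with
    | zero =>
      have hwF : Fusible ((x + y + 1) / 2) :=
        Fusible.fuse x y (valid_fusible L hvL) (valid_fusible R hvR) hxy
      have hwnn : (0:ℝ) ≤ (x + y + 1) / 2 := fusible_nonneg hwF
      have hs : (2:ℝ) ^ 0 * ((x + y + 1) / 2) = (x + y + 1) / 2 := by ring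
      rw [hs]
      have hfl0 : (0:ℤ) ≤ ⌊(x + y + 1) / 2⌋ := Int.floor_nonneg.mpr hwnn
      constructor
      · have := fusible_int hfl0
        simpa using this
      · intro _
        have h1 : (0:ℤ) ≤ ⌊(x + y + 1) / 2⌋ + 1 := by omega
        have := fusible_int h1
        have hc : ((⌊(x + y + 1) / 2⌋ + 1 : ℤ) : ℝ) = (⌊(x + y + 1) / 2⌋ : ℝ) + 1 := by
          push_cast; ring
        rw [hc] at this
        simpa using this
    | succ Mc =>
      have hP : (0:ℝ) < 2 ^ Mc := by positivity
      obtain ⟨hFx0, hFx1⟩ := ihL hvL Mc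
      obtain ⟨hFy0, hFy1⟩ := ihR hvR Mc
      set P : ℝ := (2:ℝ) ^ Mc with hPdef
      set a : ℤ := ⌊P * x⌋ with hadef
      set b : ℤ := ⌊P * y⌋ with hbdef
      have ha1 : (a : ℝ) ≤ P * x := Int.floor_le _
      have ha2 : P * x < (a : ℝ) + 1 := Int.lt_floor_add_one _
      have hb1 : (b : ℝ) ≤ P * y := Int.floor_le _
      have hb2 : P * y < (b : ℝ) + 1 := Int.lt_floor_add_one _
      have hQR : ((2 ^ Mc : ℤ) : ℝ) = P := by rw [hPdef]; push_cast; ring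
      have hQpos : (0:ℤ) < 2 ^ Mc := pow_pos (by norm_num) Mc
      -- |b - a| ≤ 2^Mc
      have hmulyx : P * (y - x) < P := by
        have := mul_lt_mul_of_pos_left hyx1 hP
        simpa using this
      have hmulxy : P * (x - y) < P := by
        have := mul_lt_mul_of_pos_left hxy1 hP
        simpa using this
      have hab : b - a ≤ 2 ^ Mc := by
        have hr : (b : ℝ) - (a : ℝ) < P + 1 := by nlinarith
        have hr2 : ((b - a : ℤ) : ℝ) < ((2 ^ Mc + 1 : ℤ) : ℝ) := by
          push_cast
          rw [hPdef] at hr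
          linarith
        exact Int.lt_add_one_iff.mp (by exact_mod_cast hr2)
      have hba : a - b ≤ 2 ^ Mc := by
        have hr : (a : ℝ) - (b : ℝ) < P + 1 := by nlinarith
        have hr2 : ((a - b : ℤ) : ℝ) < ((2 ^ Mc + 1 : ℤ) : ℝ) := by
          push_cast
          rw [hPdef] at hr
          linarith
        exact Int.lt_add_one_iff.mp (by exact_mod_cast hr2)
      set D : ℝ := (P * x - (a : ℝ)) + (P * y - (b : ℝ)) with hDdef
      have hD0 : 0 ≤ D := by rw [hDdef]; linarith
      have hD2 : D < 2 := by rw [hDdef]; linarith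
      have hkey : (2:ℝ) ^ (Mc + 1) * ((x + y + 1) / 2) = D + ((a + b + 2 ^ Mc : ℤ) : ℝ) := by
        rw [hDdef]
        push_cast
        rw [pow_succ]
        show (2:ℝ) ^ Mc * 2 * ((x + y + 1) / 2) =
          P * x - (a:ℝ) + (P * y - (b:ℝ)) + ((a:ℝ) + (b:ℝ) + 2 ^ Mc)
        rw [hPdef]; ring
      have hfl : ⌊(2:ℝ) ^ (Mc + 1) * ((x + y + 1) / 2)⌋ = ⌊D⌋ + (a + b + 2 ^ Mc) := by
        rw [hkey, Int.floor_add_intCast]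
      -- uniform helper
      have habs : ∀ p q : ℤ, |q - p| ≤ 2 ^ Mc → Fusible ((p : ℝ) / P) →
          Fusible ((q : ℝ) / P) → Fusible (((p + q + 2 ^ Mc : ℤ) : ℝ) / 2 ^ (Mc + 1)) := by
        intro p q hpq hp hq
        rw [hPdef] at hp hq
        have hg := grid_fuse Mc p q hp hq hpq
        have heq : ((p : ℝ) / 2 ^ Mc + (q : ℝ) / 2 ^ Mc + 1) / 2 =
            ((p + q + 2 ^ Mc : ℤ) : ℝ) / 2 ^ (Mc + 1) := by
          have h2 : ((2:ℝ) ^ Mc) ≠ 0 := ne_of_gt hP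
          push_cast
          rw [pow_succ]
          field_simp
          try ring
        rwa [heq] at hg
      have hFx1' : (a : ℝ) ≠ P * x → Fusible (((a + 1 : ℤ) : ℝ) / P) := by
        intro h
        have h5 := hFx1 h
        push_cast
        exact h5
      have hFy1' : (b : ℝ) ≠ P * y → Fusible (((b + 1 : ℤ) : ℝ) / P) := by
        intro h
        have h5 := hFy1 h
        push_cast
        exact h5
      -- the C1 construction : target (a + b + 2^Mc + 1)/2^(Mc+1)
      have hC1 : 0 < D → Fusible (((a + b + 2 ^ Mc + 1 : ℤ) : ℝ) / 2 ^ (Mc + 1)) := by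
        intro hDpos
        by_cases hbQ : b - a = 2 ^ Mc
        · -- x must be off grid
          have hxoff : (a : ℝ) ≠ P * x := by
            intro hEq
            have hbr : (b : ℝ) - (a : ℝ) = P := by
              rw [← hQR]
              exact_mod_cast congrArg (fun t : ℤ => (t : ℝ)) hbQ
            nlinarith
          have h := habs (a + 1) b (by rw [abs_le]; omega) (hFx1' hxoff) hFy0
          rwa [show a + 1 + b + 2 ^ Mc = a + b + 2 ^ Mc + 1 from by ring] at h
        · by_cases haQ : a - b = 2 ^ Mc
          · -- y must be off grid
            have hyoff : (b : ℝ) ≠ P * y := by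
              intro hEq
              have har : (a : ℝ) - (b : ℝ) = P := by
                rw [← hQR]
                exact_mod_cast congrArg (fun t : ℤ => (t : ℝ)) haQ
              nlinarith
            have h := habs a (b + 1) (by rw [abs_le]; omega) hFx0 (hFy1' hyoff)
            rwa [show a + (b + 1) + 2 ^ Mc = a + b + 2 ^ Mc + 1 from by ring] at h
          · -- |b - a| ≤ 2^Mc - 1 ; at least one child off grid
            by_cases hyon : (b : ℝ) = P * y
            · -- then x is off grid since D > 0
              have hxoff : (a : ℝ) ≠ P * x := by
                intro hEq
                rw [hDdef, ← hEq, ← hyon] at hDpos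
                simp at hDpos
              have h := habs (a + 1) b (by rw [abs_le]; omega) (hFx1' hxoff) hFy0
              rwa [show a + 1 + b + 2 ^ Mc = a + b + 2 ^ Mc + 1 from by ring] at h
            · have h := habs a (b + 1) (by rw [abs_le]; omega) hFx0 (hFy1' hyon)
              rwa [show a + (b + 1) + 2 ^ Mc = a + b + 2 ^ Mc + 1 from by ring] at h
      constructor
      · -- round down
        rw [hfl]
        by_cases hD1 : D < 1
        · have hfD : ⌊D⌋ = 0 := Int.floor_eq_zero_iff.mpr ⟨hD0, hD1⟩
          rw [hfD]
          have h := habs a b (by rw [abs_le]; omega) hFx0 hFy0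
          rwa [show (0:ℤ) + (a + b + 2 ^ Mc) = a + b + 2 ^ Mc from by ring]
        · push_neg at hD1
          have hfD : ⌊D⌋ = 1 := by
            rw [Int.floor_eq_iff]
            constructor
            · exact_mod_cast hD1
            · push_cast; linarith
          rw [hfD]
          have h := hC1 (by linarith)
          rwa [show (1:ℤ) + (a + b + 2 ^ Mc) = a + b + 2 ^ Mc + 1 from by ring]
      · -- round up
        intro hoff
        rw [hfl]
        rw [hfl, hkey] at hoff
        have hDne : D ≠ (⌊D⌋ : ℝ) := by
          intro hEq
          apply hoff
          push_cast
          linarith [hEq]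
        by_cases hD1 : D < 1
        · have hfD : ⌊D⌋ = 0 := Int.floor_eq_zero_iff.mpr ⟨hD0, hD1⟩
          have hDpos : 0 < D := by
            rcases lt_or_eq_of_le hD0 with h | h
            · exact h
            · exfalso; apply hDne; rw [hfD, ← h]; simp
          rw [hfD]
          have h := hC1 hDpos
          have heq : (((0:ℤ) + (a + b + 2 ^ Mc) : ℤ) : ℝ) + 1 =
              ((a + b + 2 ^ Mc + 1 : ℤ) : ℝ) := by push_cast; ring
          rw [heq]
          exact h
        · push_neg at hD1
          have hfD : ⌊D⌋ = 1 := by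
            rw [Int.floor_eq_iff]
            constructor
            · exact_mod_cast hD1
            · push_cast; linarith
          have hDgt : 1 < D := by
            rcases lt_or_eq_of_le hD1 with h | h
            · exact h
            · exfalso; apply hDne; rw [hfD, ← h]; simp
          -- both children off grid
          have hxoff : (a : ℝ) ≠ P * x := by
            intro hEq
            rw [hDdef, ← hEq] at hDgt
            have : P * y - (b : ℝ) < 1 := by linarith
            linarith [hDgt]
          have hyoff : (b : ℝ) ≠ P * y := by
            intro hEq
            rw [hDdef, ← hEq] at hDgt
            have : P * x - (a : ℝ) < 1 := by linarith
            linarith [hDgt]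
          rw [hfD]
          have h := habs (a + 1) (b + 1) (by rw [abs_le]; omega) (hFx1' hxoff) (hFy1' hyoff)
          have heq : (((1:ℤ) + (a + b + 2 ^ Mc) : ℤ) : ℝ) + 1 =
              ((a + 1 + (b + 1) + 2 ^ Mc : ℤ) : ℝ) := by push_cast; ring
          rw [heq]
          exact h

theorem limit_approach (z : ℝ) (m : ℕ) (hz : Fusible z) (hlim : IsLimitFusible z)
    (he : IsExp z m) :
    ∀ n : ℕ, Fusible (z - 1 / 2 ^ (m + n)) := by
  intro n
  obtain ⟨p, hp⟩ := he.1
  have h2N : (0:ℝ) < 2 ^ (m + n) := by positivity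
  have h2m : (0:ℝ) < 2 ^ m := by positivity
  have hex : ∃ w, (Fusible w ∧ w < z) ∧ z - 1 / 2 ^ (m + n) < w := by
    by_contra hcon
    push_neg at hcon
    have hub : z - 1 / 2 ^ (m + n) ∈ upperBounds {w : ℝ | Fusible w ∧ w < z} := by
      intro w hw
      exact hcon w hw
    have hle := hlim.2 hub
    have hpos : (0:ℝ) < 1 / 2 ^ (m + n) := by positivity
    linarith
  obtain ⟨w, ⟨hwF, hwlt⟩, hwgt⟩ := hex
  obtain ⟨T, hTv, hTval⟩ := fusible_tree hwF
  have hmain := (main_round T hTv (m + n)).1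
  rw [hTval] at hmain
  have hzZ : (2:ℝ) ^ (m + n) * z = ((p * 2 ^ n : ℤ) : ℝ) := by
    rw [hp, pow_add]
    push_cast
    field_simp
  have hfl : ⌊(2:ℝ) ^ (m + n) * w⌋ = p * 2 ^ n - 1 := by
    rw [Int.floor_eq_iff]
    constructor
    · have h1 : (2:ℝ) ^ (m + n) * (z - 1 / 2 ^ (m + n)) < 2 ^ (m + n) * w :=
        mul_lt_mul_of_pos_left hwgt h2N
      have h2 : (2:ℝ) ^ (m + n) * (z - 1 / 2 ^ (m + n)) = ((p * 2 ^ n : ℤ) : ℝ) - 1 := by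
        rw [mul_sub, hzZ]
        field_simp
      push_cast at h2 ⊢
      linarith
    · have h1 : (2:ℝ) ^ (m + n) * w < 2 ^ (m + n) * z :=
        mul_lt_mul_of_pos_left hwlt h2N
      rw [hzZ] at h1
      push_cast at h1 ⊢
      linarith
  rw [hfl] at hmain
  have hfinal : ((p * 2 ^ n - 1 : ℤ) : ℝ) / 2 ^ (m + n) = z - 1 / 2 ^ (m + n) := by
    rw [hp, pow_add]
    push_cast
    field_simp
  rwa [hfinal] at hmain
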